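/- arXiv:2605.12974 — 5 statements merged into one kernel-verified Lean document; each statement's English description precedes it below -/
import Mathlib

section
/- Let E be a metric space equipped with its Borel σ-algebra, let Q and P be probability measures on E, let β ≥ 0, and let γ be a coupling of Q and P such that dist(x, y) ≤ β for γ-almost every pair (x, y) ∈ E × E. Then for every Borel measurable set A ⊆ E, Q(A) ≤ P(Metric.cthickening β A). -/
open MeasureTheory

/-- Coupling-to-inflation step (Lemma 1 of the paper): if `γ` is a coupling of `Q` and `P`
with `γ`-a.e. displacement at most `β`, then `Q A ≤ P (cthickening β A)`. -/
theorem coupling_measure_le_cthickening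
    {E : Type*} [MetricSpace E] [MeasurableSpace E] [BorelSpace E]
    (Q P : Measure E) [IsProbabilityMeasure Q] [IsProbabilityMeasure P]
    (β : ℝ) (hβ : 0 ≤ β)
    (γ : Measure (E × E)) [IsProbabilityMeasure γ]
    (hfst : γ.map Prod.fst = Q) (hsnd : γ.map Prod.snd = P)
    (hdisp : ∀ᵐ p ∂γ, dist p.1 p.2 ≤ β)
    (A : Set E) (hA : MeasurableSet A) :
    Q A ≤ P (Metric.cthickening β A) := by
  have hQ : Q A = γ (Prod.fst ⁻¹' A) := by
    rw [← hfst, Measure.map_apply measurable_fst hA]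
  have hP : P (Metric.cthickening β A) = γ (Prod.snd ⁻¹' Metric.cthickening β A) := by
    rw [← hsnd, Measure.map_apply measurable_snd
      (Metric.isClosed_cthickening.measurableSet)]
  rw [hQ, hP]
  refine measure_mono_ae ?_
  filter_upwards [hdisp] with p hp hpA
  exact Metric.mem_cthickening_of_dist_le p.2 p.1 β A hpA (by rwa [dist_comm])
end

section
/- Let E be a metric space equipped with its Borel σ-algebra, let Q and P be probability measures on E, and let β ≥ 0. Suppose that for every η > 0 there exists a coupling γ_η of Q and P such that dist(x, y) ≤ β + η for γ_η-almost every pair (x, y). Then for every Borel measurable set A ⊆ E, Q(A) ≤ P(Metric.cthickening β A). -/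
open MeasureTheory

/-- ∞-Wasserstein coupling characterization step of Lemma 1: if for every `η > 0` there is
a coupling of `Q` and `P` with a.e. displacement at most `β + η`, then
`Q A ≤ P (cthickening β A)`. -/
theorem wasserstein_couplings_measure_le_cthickening
    {E : Type*} [MetricSpace E] [MeasurableSpace E] [BorelSpace E]
    (Q P : Measure E) [IsProbabilityMeasure Q] [IsProbabilityMeasure P]
    (β : ℝ) (hβ : 0 ≤ β)
    (hcoup : ∀ η : ℝ, 0 < η → ∃ γ : Measure (E × E), IsProbabilityMeasure γ ∧
      γ.map Prod.fst = Q ∧ γ.map Prod.snd = P ∧ (∀ᵐ p ∂γ, dist p.1 p.2 ≤ β + η))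
    (A : Set E) (hA : MeasurableSet A) :
    Q A ≤ P (Metric.cthickening β A) := by
  -- Step 1: for each positive η, `Q A ≤ P (cthickening (β+η) A)`.
  have step1 : ∀ η : ℝ, 0 < η → Q A ≤ P (Metric.cthickening (β + η) A) := by
    intro η hη
    obtain ⟨γ, hγ, hfst, hsnd, hae⟩ := hcoup η hη
    have hTmeas : MeasurableSet (Metric.cthickening (β + η) A) :=
      (Metric.isClosed_cthickening).measurableSet
    have hQ : Q A = γ (Prod.fst ⁻¹' A) := by
      rw [← hfst, Measure.map_apply measurable_fst hA]
    have hP : P (Metric.cthickening (β + η) A)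
        = γ (Prod.snd ⁻¹' (Metric.cthickening (β + η) A)) := by
      rw [← hsnd, Measure.map_apply measurable_snd hTmeas]
    rw [hQ, hP]
    refine measure_mono_ae ?_
    filter_upwards [hae] with p hp hpA
    exact Metric.mem_cthickening_of_dist_le p.2 p.1 (β + η) A hpA (by rwa [dist_comm])
  -- The decreasing family of closed neighborhoods.
  set T : ℕ → Set E := fun n => Metric.cthickening (β + 1 / (n + 1)) A with hT
  have hanti : Antitone T := by
    intro n m hnm
    refine Metric.cthickening_mono ?_ A
    have : (1 : ℝ) / (m + 1) ≤ 1 / (n + 1) := by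
      apply one_div_le_one_div_of_le
      · positivity
      · exact_mod_cast Nat.succ_le_succ hnm
    linarith
  have hinter : (⋂ n, T n) = Metric.cthickening β A := by
    ext x
    simp only [Set.mem_iInter, hT, Metric.mem_cthickening_iff]
    constructor
    · intro h
      refine ENNReal.le_of_forall_pos_le_add fun ε hε hfin => ?_
      obtain ⟨n, hn⟩ := exists_nat_one_div_lt (show (0:ℝ) < ε from hε)
      calc EMetric.infEdist x A ≤ ENNReal.ofReal (β + 1 / (n + 1)) := h n
        _ ≤ ENNReal.ofReal β + ENNReal.ofReal (1 / (n + 1)) := ENNReal.ofReal_add_le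
        _ ≤ ENNReal.ofReal β + ε := by
            gcongr
            rw [← ENNReal.ofReal_coe_nnreal]
            exact ENNReal.ofReal_le_ofReal hn.le
    · intro h n
      refine h.trans (ENNReal.ofReal_le_ofReal ?_)
      have : (0:ℝ) < 1 / (n + 1) := by positivity
      linarith
  have hmeas : ∀ n, NullMeasurableSet (T n) P :=
    fun n => (Metric.isClosed_cthickening.measurableSet).nullMeasurableSet
  have hdir : Directed (· ⊇ ·) T := hanti.directed_ge
  have hfin : ∃ n, P (T n) ≠ ⊤ := ⟨0, measure_ne_top _ _⟩
  calc Q A ≤ ⨅ n, P (T n) := le_iInf fun n => step1 _ (by positivity)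
    _ = P (⋂ n, T n) := (Directed.measure_iInter hmeas hdir hfin).symm
    _ = P (Metric.cthickening β A) := by rw [hinter]
end

section
/- Let E be a metric space equipped with its Borel σ-algebra, let Q and P be probability measures on E, let β ≥ 0 and L ≥ 0, let H : E → ℝ be Borel measurable, and set A = {x ∈ E | H(x) < 0}. Suppose H is Lipschitz with constant L on Metric.cthickening β A, and suppose there exists a coupling γ of Q and P such that dist(x, y) ≤ β for γ-almost every pair (x, y). Then Q({x | H(x) < 0}) ≤ P({x | H(x) ≤ L · β}). -/
open MeasureTheory

/-- Lemma 1 of the paper (closed-inflation form): if `H` is `L`-Lipschitz on the closed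
`β`-thickening of the failure set `A = {H < 0}` and `Q` admits a coupling with `P` whose
a.e. displacement is at most `β`, then
`Q {H < 0} ≤ P {H ≤ L * β}`. -/
theorem dr_failure_bound_cthickening
    {E : Type*} [MetricSpace E] [MeasurableSpace E] [BorelSpace E]
    (Q P : Measure E) [IsProbabilityMeasure Q] [IsProbabilityMeasure P]
    (β L : ℝ) (hβ : 0 ≤ β) (hL : 0 ≤ L)
    (H : E → ℝ) (hH : Measurable H)
    (A : Set E) (hA : A = {x : E | H x < 0})
    (hlip : ∀ x ∈ Metric.cthickening β A, ∀ y ∈ Metric.cthickening β A,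
      |H x - H y| ≤ L * dist x y)
    (hcoup : ∃ γ : Measure (E × E), IsProbabilityMeasure γ ∧
      γ.map Prod.fst = Q ∧ γ.map Prod.snd = P ∧ (∀ᵐ p ∂γ, dist p.1 p.2 ≤ β)) :
    Q {x : E | H x < 0} ≤ P {x : E | H x ≤ L * β} := by
  obtain ⟨γ, hγprob, hfst, hsnd, hae⟩ := hcoup
  have hmA : MeasurableSet {x : E | H x < 0} := measurableSet_lt hH measurable_const
  have hmB : MeasurableSet {x : E | H x ≤ L * β} := measurableSet_le hH measurable_const
  have h1 : Q {x : E | H x < 0} = γ (Prod.fst ⁻¹' {x : E | H x < 0}) := by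
    rw [← hfst, Measure.map_apply measurable_fst hmA]
  have h2 : P {x : E | H x ≤ L * β} = γ (Prod.snd ⁻¹' {x : E | H x ≤ L * β}) := by
    rw [← hsnd, Measure.map_apply measurable_snd hmB]
  rw [h1, h2]
  refine measure_mono_ae ?_
  filter_upwards [hae] with p hp hmem
  have hx : p.1 ∈ Metric.cthickening β A :=
    Metric.self_subset_cthickening A (hA ▸ hmem)
  have hy : p.2 ∈ Metric.cthickening β A :=
    Metric.mem_cthickening_of_dist_le p.2 p.1 β A (hA ▸ hmem) (by rwa [dist_comm])
  have habs := hlip p.2 hy p.1 hx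
  have hd : L * dist p.2 p.1 ≤ L * β := by
    rw [dist_comm]; exact mul_le_mul_of_nonneg_left hp hL
  have hmem' : H p.1 < 0 := hmem
  have := abs_le.mp habs
  show H p.2 ≤ L * β
  linarith [this.2]
end

section
/- Let E be a metric space equipped with its Borel σ-algebra, let Q and P be probability measures on E, let β ≥ 0 and L ≥ 0, let H : E → ℝ be Borel measurable, and set A = {x ∈ E | H(x) < 0}. Suppose H is Lipschitz with constant L on Metric.thickening β A, and suppose there exists a coupling γ of Q and P such that dist(x, y) < β for γ-almost every pair (x, y). Then Q({x | H(x) < 0}) ≤ P({x | H(x) < L · β}). -/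
open MeasureTheory

/-- Strict-inequality form of Lemma 1 of the paper: if `H` is `L`-Lipschitz on the open
`β`-thickening of the failure set `A = {H < 0}` and `Q` admits a coupling with `P` whose
a.e. displacement is strictly less than `β`, then
`Q {H < 0} ≤ P {H < L * β}`. -/
theorem dr_failure_bound_thickening
    {E : Type*} [MetricSpace E] [MeasurableSpace E] [BorelSpace E]
    (Q P : Measure E) [IsProbabilityMeasure Q] [IsProbabilityMeasure P]
    (β L : ℝ) (hβ : 0 ≤ β) (hL : 0 ≤ L)
    (H : E → ℝ) (hH : Measurable H)
    (A : Set E) (hA : A = {x : E | H x < 0})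
    (hlip : ∀ x ∈ Metric.thickening β A, ∀ y ∈ Metric.thickening β A,
      |H x - H y| ≤ L * dist x y)
    (hcoup : ∃ γ : Measure (E × E), IsProbabilityMeasure γ ∧
      γ.map Prod.fst = Q ∧ γ.map Prod.snd = P ∧ (∀ᵐ p ∂γ, dist p.1 p.2 < β)) :
    Q {x : E | H x < 0} ≤ P {x : E | H x < L * β} := by
  obtain ⟨γ, hγ, hfst, hsnd, hdist⟩ := hcoup
  have hQ : Q {x | H x < 0} = γ {p : E × E | H p.1 < 0} := by
    rw [← hfst, Measure.map_apply measurable_fst (measurableSet_lt hH measurable_const)]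
    rfl
  have hP : P {x | H x < L * β} = γ {p : E × E | H p.2 < L * β} := by
    rw [← hsnd, Measure.map_apply measurable_snd (measurableSet_lt hH measurable_const)]
    rfl
  rw [hQ, hP]
  apply measure_mono_ae
  filter_upwards [hdist] with p hp hp1
  have hβpos : 0 < β := lt_of_le_of_lt dist_nonneg hp
  have h1 : p.1 ∈ Metric.thickening β A :=
    Metric.self_subset_thickening hβpos A (by rw [hA]; exact hp1)
  have h2 : p.2 ∈ Metric.thickening β A := by
    rw [Metric.mem_thickening_iff]
    exact ⟨p.1, by rw [hA]; exact hp1, by rw [dist_comm]; exact hp⟩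
  have habs := hlip p.2 h2 p.1 h1
  have h3 : H p.2 - H p.1 ≤ L * dist p.2 p.1 := (abs_le.mp habs).2
  have hd : L * dist p.2 p.1 ≤ L * β :=
    mul_le_mul_of_nonneg_left (by rw [dist_comm]; exact hp.le) hL
  show H p.2 < L * β
  have hp1' : H p.1 < 0 := hp1
  linarith
end

section
/- Let E be a metric space equipped with its Borel σ-algebra, let Q and P be probability measures on E, let β ≥ 0 and L ≥ 0, and let H : E → ℝ be Lipschitz with constant L on all of E. Suppose there exists a coupling γ of Q and P such that dist(x, y) ≤ β for γ-almost every pair (x, y). Then Q({x | H(x) < 0}) ≤ P({x | H(x) < L · β}). -/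
open MeasureTheory

/-- Globally Lipschitz version of Lemma 1 of the paper: if `H` is `L`-Lipschitz on all of `E`
and `Q` admits a coupling with `P` whose a.e. displacement is at most `β`, then
`Q {H < 0} ≤ P {H < L * β}`. -/
theorem dr_failure_bound_global_lipschitz
    {E : Type*} [MetricSpace E] [MeasurableSpace E] [BorelSpace E]
    (Q P : Measure E) [IsProbabilityMeasure Q] [IsProbabilityMeasure P]
    (β L : ℝ) (hβ : 0 ≤ β) (hL : 0 ≤ L)
    (H : E → ℝ)
    (hlip : ∀ x y : E, |H x - H y| ≤ L * dist x y)
    (hcoup : ∃ γ : Measure (E × E), IsProbabilityMeasure γ ∧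
      γ.map Prod.fst = Q ∧ γ.map Prod.snd = P ∧ (∀ᵐ p ∂γ, dist p.1 p.2 ≤ β)) :
    Q {x : E | H x < 0} ≤ P {x : E | H x < L * β} := by
  obtain ⟨γ, hγ, hfst, hsnd, hae⟩ := hcoup
  have hcont : Continuous H := by
    have : LipschitzWith ⟨L, hL⟩ H :=
      LipschitzWith.of_dist_le_mul fun x y => by
        rw [Real.dist_eq]; exact hlip x y
    exact this.continuous
  have hmeas : Measurable H := hcont.measurable
  have h1 : Q {x : E | H x < 0} = γ {p : E × E | H p.1 < 0} := by
    rw [← hfst, Measure.map_apply measurable_fst (measurableSet_lt hmeas measurable_const)]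
    rfl
  have h2 : P {x : E | H x < L * β} = γ {p : E × E | H p.2 < L * β} := by
    rw [← hsnd, Measure.map_apply measurable_snd (measurableSet_lt hmeas measurable_const)]
    rfl
  rw [h1, h2]
  apply measure_mono_ae
  filter_upwards [hae] with p hp hp1
  have := hlip p.2 p.1
  have : H p.2 ≤ H p.1 + L * dist p.1 p.2 := by
    have := abs_le.mp (hlip p.2 p.1)
    rw [dist_comm] at this
    linarith [this.2]
  calc H p.2 ≤ H p.1 + L * dist p.1 p.2 := this
    _ < 0 + L * β := by
        have : L * dist p.1 p.2 ≤ L * β := mul_le_mul_of_nonneg_left hp hL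
        have hp1' : H p.1 < 0 := hp1
        linarith [hp1']
    _ = L * β := by ring
end
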